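/- For every n ≥ 1 and every positive braid β ∈ B_n^+, the value tr_n^0(β) of the Ocneanu trace on the image of β in the Hecke algebra H(B_n) belongs to the subring ℤ[q, z] of 𝕂(z). -/

import Mathlib

noncomputable section
open scoped Classical

/-- `𝕂 = ℂ(q)`. -/
abbrev K : Type := RatFunc ℂ
/-- `𝕂(z)`. -/
abbrev Kz : Type := RatFunc K
/-- the variable `q`. -/
def q : K := RatFunc.X
/-- the variable `z`. -/
def z : Kz := RatFunc.X

/-- The braid relations, as elements of the free group on `σ_1, …, σ_{n-1}`
(0-indexed `i ↔ σ_{i+1}`). -/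
def braidRels (n : ℕ) : Set (FreeGroup (Fin (n - 1))) :=
  {r | (∃ i j : Fin (n - 1), ((i : ℕ) + 1 = (j : ℕ) ∨ (j : ℕ) + 1 = (i : ℕ)) ∧
          r = FreeGroup.of i * FreeGroup.of j * FreeGroup.of i *
              (FreeGroup.of j * FreeGroup.of i * FreeGroup.of j)⁻¹) ∨
       (∃ i j : Fin (n - 1), ((i : ℕ) + 2 ≤ (j : ℕ) ∨ (j : ℕ) + 2 ≤ (i : ℕ)) ∧
          r = FreeGroup.of i * FreeGroup.of j * (FreeGroup.of j * FreeGroup.of i)⁻¹)}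

/-- The braid group `B_n` on `n` strands. -/
def BG (n : ℕ) : Type := PresentedGroup (braidRels n)

instance (n : ℕ) : Group (BG n) := inferInstanceAs (Group (PresentedGroup _))

/-- The standard generator `σ_{i+1}` of the braid group. -/
def bgen {n : ℕ} (i : Fin (n - 1)) : BG n := PresentedGroup.of i

lemma bgen_braid {m : ℕ} (i j : Fin (m - 1)) (h : (i : ℕ) + 1 = (j : ℕ) ∨ (j : ℕ) + 1 = (i : ℕ)) :
    bgen (n := m) i * bgen j * bgen i = bgen j * bgen i * bgen j := by
  have key : PresentedGroup.mk (braidRels m)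
      (FreeGroup.of i * FreeGroup.of j * FreeGroup.of i *
        (FreeGroup.of j * FreeGroup.of i * FreeGroup.of j)⁻¹) = 1 :=
    (QuotientGroup.eq_one_iff _).mpr (Subgroup.subset_normalClosure (Or.inl ⟨i, j, h, rfl⟩))
  rw [map_mul, map_inv, mul_inv_eq_one] at key
  simp only [map_mul] at key
  exact key

lemma bgen_comm {m : ℕ} (i j : Fin (m - 1)) (h : (i : ℕ) + 2 ≤ (j : ℕ) ∨ (j : ℕ) + 2 ≤ (i : ℕ)) :
    bgen (n := m) i * bgen j = bgen j * bgen i := by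
  have key : PresentedGroup.mk (braidRels m)
      (FreeGroup.of i * FreeGroup.of j * (FreeGroup.of j * FreeGroup.of i)⁻¹) = 1 :=
    (QuotientGroup.eq_one_iff _).mpr (Subgroup.subset_normalClosure (Or.inr ⟨i, j, h, rfl⟩))
  rw [map_mul, map_inv, mul_inv_eq_one] at key
  simp only [map_mul] at key
  exact key

/-- The standard inclusion `B_n → B_{n+1}`. -/
def inclB {n : ℕ} : BG n →* BG (n + 1) :=
  PresentedGroup.toGroup (f := fun i : Fin (n - 1) => bgen (Fin.castLE (by omega) i))
    (by
      rintro r (⟨i, j, hij, rfl⟩ | ⟨i, j, hij, rfl⟩) <;>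
        simp only [map_mul, map_inv, FreeGroup.lift_apply_of, mul_inv_eq_one]
      · exact bgen_braid _ _ (by simpa using hij)
      · exact bgen_comm _ _ (by simpa using hij))

/-- The positive braid monoid `B_n⁺`, the submonoid of `B_n` generated by the `σ_i`. -/
def Bplus (n : ℕ) : Submonoid (BG n) := Submonoid.closure (Set.range (bgen (n := n)))

/-- The monoid algebra `𝕂[B_n]`. -/
abbrev MAB (n : ℕ) : Type := MonoidAlgebra K (BG n)

/-- The Hecke relations `σ_k² = (q-1)σ_k + q`. -/
def hrelB (n : ℕ) : MAB n → MAB n → Prop := fun x y =>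
  ∃ i : Fin (n - 1), x = (MonoidAlgebra.of K (BG n) (bgen i)) ^ 2 ∧
    y = (q - 1) • MonoidAlgebra.of K (BG n) (bgen i) + q • 1

/-- The Hecke algebra `H(B_n)` of the braid group / symmetric group. -/
def HB (n : ℕ) : Type := RingQuot (hrelB n)

instance (n : ℕ) : Ring (HB n) := inferInstanceAs (Ring (RingQuot (hrelB n)))
instance (n : ℕ) : Algebra K (HB n) := inferInstanceAs (Algebra K (RingQuot (hrelB n)))

/-- The natural map `B_n → H(B_n)`. -/
def ιHB {n : ℕ} (β : BG n) : HB n := RingQuot.mkAlgHom K (hrelB n) (MonoidAlgebra.of K (BG n) β)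

/-- The generator `σ_n` of `B_{n+2}` (0-indexed `n`), used in the Markov condition. -/
def lastGenB (n : ℕ) : Fin ((n + 2) - 1) := ⟨n, by omega⟩

/-- A collection of 𝕂-linear maps `H(B_n) → 𝕂(z)`, `n ≥ 1`
(index `n` in the collection corresponds to `n+1` strands). -/
abbrev TRBc : Type := ∀ n : ℕ, HB (n + 1) →ₗ[K] Kz

/-- The Markov trace conditions for the tower of Hecke algebras `{H(B_n)}ₙ`. -/
def IsMarkovB (T : TRBc) : Prop :=
  (∀ (n : ℕ) (α β : BG (n + 1)), T n (ιHB (α * β)) = T n (ιHB (β * α))) ∧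
  (∀ (n : ℕ) (β : BG (n + 1)), T (n + 1) (ιHB (inclB β)) = T n (ιHB β)) ∧
  (∀ (n : ℕ) (β : BG (n + 1)),
    T (n + 1) (ιHB (inclB β * bgen (lastGenB n))) = z * T n (ιHB β))

/-- The subring `ℤ[q] ⊆ 𝕂`. -/
def Zq : Subring K := Subring.closure {q}

/-- The subring `ℤ[q, z] ⊆ 𝕂(z)`. -/
def Rqz : Subring Kz := Subring.closure {algebraMap K Kz q, z}

/-- Evaluation at `z = 0` of a rational function in `z`. -/
def evalz0 : Kz → K := RatFunc.eval (RingHom.id K) 0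

/-! Let `H_m` be the `ℤ[q]`-span of the positive words in `σ_1, …, σ_{m-1}`. Then
`H_{m+1} = H_m + H_m σ_m H_m`: a second letter `σ_m` in a word is removed by
`σ_m A σ_m = A σ_m² = (q - 1) A σ_m + q A` when `A` avoids `σ_{m-1}`, and otherwise, after reducing
`A` inside `H_m`, by `σ_m A σ_{m-1} B σ_m = A σ_{m-1} σ_m σ_{m-1} B`. On `H_n`, the trace on `n + 1`
strands restricts to the trace on `n` strands, and `tr (A σ_n B) = z · tr (B A)` by cyclicity and
the Markov property, so induction on the number of strands keeps `tr` of positive braids in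
`ℤ[q, z]`. -/

lemma ιHB_mul {n : ℕ} (α β : BG n) : ιHB (α * β) = ιHB α * ιHB β := by
  unfold ιHB; rw [map_mul, map_mul]; rfl

lemma ιHB_one {n : ℕ} : ιHB (1 : BG n) = 1 := by
  unfold ιHB; rw [map_one, map_one]; rfl

lemma ιHB_bgen_mul_self {n : ℕ} (i : Fin (n - 1)) :
    ιHB (bgen i) * ιHB (bgen i) = (q - 1) • ιHB (bgen i) + q • (1 : HB n) := by
  have h := RingQuot.mkAlgHom_rel K (s := hrelB n) ⟨i, rfl, rfl⟩
  rwa [map_pow, map_add, map_smul, map_smul, map_one, pow_two] at h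

lemma inclB_bgen {n : ℕ} (j : Fin (n - 1)) :
    inclB (bgen j) = bgen (Fin.castLE (by omega) j) :=
  PresentedGroup.toGroup.of _

section Words

variable {N : ℕ}

/-- Positive words are lists of `0`-based indices; a letter `i ≥ N` stands for `1`. -/
def braidGen (N i : ℕ) : BG (N + 1) :=
  if h : i < N then bgen ⟨i, by omega⟩ else 1

def braidWord (N : ℕ) (w : List ℕ) : BG (N + 1) := (w.map (braidGen N)).prod

def heckeWord (N : ℕ) (w : List ℕ) : HB (N + 1) := ιHB (braidWord N w)

@[simp] lemma braidWord_nil : braidWord N [] = 1 := rfl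

@[simp] lemma braidWord_cons (i : ℕ) (w : List ℕ) :
    braidWord N (i :: w) = braidGen N i * braidWord N w := List.prod_cons

@[simp] lemma braidWord_append (u w : List ℕ) :
    braidWord N (u ++ w) = braidWord N u * braidWord N w := by
  simp [braidWord]

lemma heckeWord_nil : heckeWord N [] = 1 := ιHB_one

lemma heckeWord_cons (i : ℕ) (w : List ℕ) :
    heckeWord N (i :: w) = ιHB (braidGen N i) * heckeWord N w := by
  rw [heckeWord, braidWord_cons, ιHB_mul, heckeWord]

lemma heckeWord_append (u w : List ℕ) :
    heckeWord N (u ++ w) = heckeWord N u * heckeWord N w := by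
  rw [heckeWord, braidWord_append, ιHB_mul, heckeWord, heckeWord]

lemma braidGen_commute {i j : ℕ} (h : i + 2 ≤ j ∨ j + 2 ≤ i) :
    Commute (braidGen N i) (braidGen N j) := by
  unfold braidGen
  split_ifs
  · exact bgen_comm _ _ h
  all_goals simp

lemma braidGen_braid {i j : ℕ} (hi : i < N) (hj : j < N) (h : i + 1 = j ∨ j + 1 = i) :
    braidGen N i * braidGen N j * braidGen N i = braidGen N j * braidGen N i * braidGen N j := by
  unfold braidGen
  rw [dif_pos hi, dif_pos hj]
  exact bgen_braid _ _ h

lemma braidWord_commute {A : List ℕ} {j : ℕ} (hA : ∀ i ∈ A, i + 2 ≤ j) :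
    Commute (braidWord N A) (braidGen N j) :=
  Commute.list_prod_left _ _ <| by
    simpa using fun i hi => braidGen_commute (Or.inl (hA i hi))

lemma ιHB_braidGen_mul_self {i : ℕ} (hi : i < N) :
    ιHB (braidGen N i) * ιHB (braidGen N i) = (q - 1) • ιHB (braidGen N i) + q • 1 := by
  rw [braidGen, dif_pos hi]
  exact ιHB_bgen_mul_self _

lemma inclB_braidWord {n : ℕ} {w : List ℕ} (hw : ∀ i ∈ w, i < n) :
    inclB (braidWord n w) = braidWord (n + 1) w := by
  induction w with
  | nil => rw [braidWord_nil, braidWord_nil, map_one]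
  | cons a w ih =>
    have ha : a < n := hw a List.mem_cons_self
    rw [braidWord_cons, braidWord_cons, map_mul, ih fun i hi => hw i (List.mem_cons_of_mem a hi),
      braidGen, dif_pos ha, inclB_bgen, braidGen, dif_pos (by omega)]
    rfl

lemma bgen_lastGenB (n : ℕ) : bgen (lastGenB n) = braidGen (n + 1) n := by
  rw [braidGen, dif_pos (by omega)]
  rfl

lemma exists_braidWord_eq_of_mem_Bplus {n : ℕ} {β : BG (n + 1)} (hβ : β ∈ Bplus (n + 1)) :
    ∃ w : List ℕ, (∀ i ∈ w, i < n) ∧ braidWord n w = β := by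
  induction hβ using Submonoid.closure_induction with
  | mem _ h =>
    obtain ⟨j, rfl⟩ := h
    exact ⟨[j], by simp, by simp [braidGen]⟩
  | one => exact ⟨[], by simp, rfl⟩
  | mul _ _ _ _ hx hy =>
    obtain ⟨u, hu, rfl⟩ := hx
    obtain ⟨w, hw, rfl⟩ := hy
    exact ⟨u ++ w, List.forall_mem_append.mpr ⟨hu, hw⟩, braidWord_append u w⟩

end Words

section Spanning

variable {N : ℕ}

def reducedWords (N : ℕ) : ℕ → Set (HB (N + 1))
  | 0 => {1}
  | m + 1 => {x | ∃ A, (∀ i ∈ A, i < m) ∧ heckeWord N A = x} ∪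
      {x | ∃ A B, (∀ i ∈ A, i < m) ∧ (∀ i ∈ B, i < m) ∧ heckeWord N (A ++ m :: B) = x}

lemma smul_mem_of_mem_Zq {M : Type*} [AddCommGroup M] [Module K M] {p : Submodule Zq M}
    {c : K} (hc : c ∈ Zq) {x : M} (hx : x ∈ p) : c • x ∈ p :=
  p.smul_mem ⟨c, hc⟩ hx

lemma q_mem_Zq : q ∈ Zq := Subring.subset_closure rfl

lemma heckeWord_mem_span_reducedWords_succ {m : ℕ} {A : List ℕ} (hA : ∀ i ∈ A, i < m) :
    heckeWord N A ∈ Submodule.span Zq (reducedWords N (m + 1)) :=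
  Submodule.subset_span (Or.inl ⟨A, hA, rfl⟩)

lemma heckeWord_append_cons_mem_span_reducedWords {m : ℕ} {A B : List ℕ}
    (hA : ∀ i ∈ A, i < m) (hB : ∀ i ∈ B, i < m) :
    heckeWord N (A ++ m :: B) ∈ Submodule.span Zq (reducedWords N (m + 1)) :=
  Submodule.subset_span (Or.inr ⟨A, B, hA, hB, rfl⟩)

lemma gen_mul_heckeWord_mul_gen_mem_span {m : ℕ} (hm : m < N) {A : List ℕ}
    (hA : ∀ i ∈ A, i + 2 ≤ m) :
    ιHB (braidGen N m) * heckeWord N A * ιHB (braidGen N m) ∈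
      Submodule.span Zq (reducedWords N (m + 1)) := by
  have hA' : ∀ i ∈ A, i < m := fun i hi => by have := hA i hi; omega
  have h : ιHB (braidGen N m) * heckeWord N A * ιHB (braidGen N m) =
      (q - 1) • heckeWord N (A ++ [m]) + q • heckeWord N A := by
    rw [heckeWord, ← ιHB_mul, (braidWord_commute hA).eq.symm, ιHB_mul, mul_assoc,
      ιHB_braidGen_mul_self hm, mul_add, mul_smul_comm, mul_smul_comm, mul_one,
      ← heckeWord, heckeWord_append, heckeWord_cons, heckeWord_nil, mul_one]
  rw [h]
  exact add_mem
    (smul_mem_of_mem_Zq (sub_mem q_mem_Zq (one_mem _))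
      (heckeWord_append_cons_mem_span_reducedWords hA' (by simp)))
    (smul_mem_of_mem_Zq q_mem_Zq (heckeWord_mem_span_reducedWords_succ hA'))

lemma gen_mul_mul_gen_mem_span_of_mem {m : ℕ} (hm : m < N) {x : HB (N + 1)}
    (hx : x ∈ reducedWords N m) :
    ιHB (braidGen N m) * x * ιHB (braidGen N m) ∈ Submodule.span Zq (reducedWords N (m + 1)) := by
  cases m with
  | zero =>
    rw [reducedWords, Set.mem_singleton_iff.mp hx, ← heckeWord_nil]
    exact gen_mul_heckeWord_mul_gen_mem_span hm (by simp)
  | succ k =>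
    rcases hx with ⟨A, hA, rfl⟩ | ⟨A, B, hA, hB, rfl⟩
    · exact gen_mul_heckeWord_mul_gen_mem_span hm fun i hi => by have := hA i hi; omega
    · have hA2 : ∀ i ∈ A, i + 2 ≤ k + 1 := fun i hi => by have := hA i hi; omega
      have hB2 : ∀ i ∈ B, i + 2 ≤ k + 1 := fun i hi => by have := hB i hi; omega
      have h : ιHB (braidGen N (k + 1)) * heckeWord N (A ++ k :: B) * ιHB (braidGen N (k + 1)) =
          heckeWord N ((A ++ [k]) ++ (k + 1) :: k :: B) := by
        simp only [heckeWord, ← ιHB_mul]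
        congr 1
        simp only [braidWord_append, braidWord_cons, braidWord_nil, mul_one]
        rw [← mul_assoc, ← (braidWord_commute hA2).eq, mul_assoc, mul_assoc, mul_assoc,
          (braidWord_commute hB2).eq]
        simp only [mul_assoc]
        congr 1
        simp only [← mul_assoc]
        rw [braidGen_braid hm (by omega) (Or.inr rfl)]
      rw [h]
      refine heckeWord_append_cons_mem_span_reducedWords (fun i hi => ?_) (fun i hi => ?_)
      · rcases List.mem_append.mp hi with hi | hi
        · exact (hA i hi).trans (by omega)
        · rw [List.mem_singleton.mp hi]; omega
      · rcases List.mem_cons.mp hi with rfl | hi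
        · omega
        · exact (hB i hi).trans (by omega)

lemma gen_mul_mul_gen_mem_span {m : ℕ} (hm : m < N) {x : HB (N + 1)}
    (hx : x ∈ Submodule.span Zq (reducedWords N m)) :
    ιHB (braidGen N m) * x * ιHB (braidGen N m) ∈ Submodule.span Zq (reducedWords N (m + 1)) :=
  (Submodule.span_le (p := (Submodule.span Zq _).comap
    (LinearMap.mulLeftRight Zq (ιHB (braidGen N m), ιHB (braidGen N m))))).mpr
    (fun _ hy => gen_mul_mul_gen_mem_span_of_mem hm hy) hx

lemma mul_heckeWord_mem_span {m : ℕ} {B : List ℕ} (hB : ∀ i ∈ B, i < m) {x : HB (N + 1)}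
    (hx : x ∈ Submodule.span Zq (reducedWords N (m + 1))) :
    x * heckeWord N B ∈ Submodule.span Zq (reducedWords N (m + 1)) := by
  refine (Submodule.span_le (p := (Submodule.span Zq _).comap
    (LinearMap.mulRight Zq (heckeWord N B)))).mpr ?_ hx
  intro y hy
  simp only [SetLike.mem_coe, Submodule.mem_comap, LinearMap.mulRight_apply]
  rcases hy with ⟨A, hA, rfl⟩ | ⟨A, B', hA, hB', rfl⟩
  · rw [← heckeWord_append]
    exact heckeWord_mem_span_reducedWords_succ (List.forall_mem_append.mpr ⟨hA, hB⟩)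
  · rw [← heckeWord_append, List.append_assoc, List.cons_append]
    exact heckeWord_append_cons_mem_span_reducedWords hA (List.forall_mem_append.mpr ⟨hB', hB⟩)

lemma gen_mul_mem_span {m i : ℕ} (hm : m < N) (hi : i ≤ m)
    (hlow : ∀ A : List ℕ, (∀ j ∈ A, j < m) → heckeWord N A ∈ Submodule.span Zq (reducedWords N m))
    {x : HB (N + 1)} (hx : x ∈ Submodule.span Zq (reducedWords N (m + 1))) :
    ιHB (braidGen N i) * x ∈ Submodule.span Zq (reducedWords N (m + 1)) := by
  refine (Submodule.span_le (p := (Submodule.span Zq _).comap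
    (LinearMap.mulLeft Zq (ιHB (braidGen N i))))).mpr ?_ hx
  intro y hy
  simp only [SetLike.mem_coe, Submodule.mem_comap, LinearMap.mulLeft_apply]
  rcases hi.lt_or_eq with hi | rfl
  · rcases hy with ⟨A, hA, rfl⟩ | ⟨A, B, hA, hB, rfl⟩
    · rw [← heckeWord_cons]
      exact heckeWord_mem_span_reducedWords_succ (List.forall_mem_cons.mpr ⟨hi, hA⟩)
    · rw [← heckeWord_cons, ← List.cons_append]
      exact heckeWord_append_cons_mem_span_reducedWords (List.forall_mem_cons.mpr ⟨hi, hA⟩) hB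
  · rcases hy with ⟨A, hA, rfl⟩ | ⟨A, B, hA, hB, rfl⟩
    · rw [← heckeWord_cons, ← List.nil_append (i :: A)]
      exact heckeWord_append_cons_mem_span_reducedWords (by simp) hA
    · rw [heckeWord_append, heckeWord_cons, ← mul_assoc, ← mul_assoc]
      exact mul_heckeWord_mem_span hB (gen_mul_mul_gen_mem_span hm (hlow A hA))

theorem heckeWord_mem_span_reducedWords {m : ℕ} (hm : m ≤ N) {w : List ℕ}
    (hw : ∀ i ∈ w, i < m) : heckeWord N w ∈ Submodule.span Zq (reducedWords N m) := by
  induction m generalizing w with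
  | zero =>
    obtain rfl : w = [] := w.eq_nil_iff_forall_not_mem.mpr fun i hi => (hw i hi).not_ge i.zero_le
    exact Submodule.subset_span heckeWord_nil
  | succ m ih =>
    induction w with
    | nil => exact heckeWord_mem_span_reducedWords_succ (by simp)
    | cons i w ihw =>
      rw [List.forall_mem_cons] at hw
      rw [heckeWord_cons]
      exact gen_mul_mem_span hm (by omega) (fun A hA => ih (by omega) hA) (ihw hw.2)

end Spanning

lemma algebraMap_mem_Rqz {c : K} (hc : c ∈ Zq) : algebraMap K Kz c ∈ Rqz := by
  have hZq : Zq ≤ Rqz.comap (algebraMap K Kz) := Subring.closure_le.mpr <|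
    Set.singleton_subset_iff.mpr (show algebraMap K Kz q ∈ Rqz from
      Subring.subset_closure (Or.inl rfl))
  exact hZq hc

lemma mem_Rqz_of_mem_span {M : Type*} [AddCommGroup M] [Module K M] (f : M →ₗ[K] Kz)
    {S : Set M} (hS : ∀ x ∈ S, f x ∈ Rqz) {x : M} (hx : x ∈ Submodule.span Zq S) :
    f x ∈ Rqz := by
  induction hx using Submodule.span_induction with
  | mem x h => exact hS x h
  | zero => simp [Rqz.zero_mem]
  | add x y _ _ hx hy => exact (map_add f x y).symm ▸ add_mem hx hy
  | smul a x _ hx =>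
    rw [Subring.smul_def, map_smul, RatFunc.smul_eq_C_mul, ← RatFunc.algebraMap_eq_C]
    exact mul_mem (algebraMap_mem_Rqz a.2) hx

namespace IsMarkovB

variable {T : TRBc}

lemma apply_mem_Rqz_of_mem_reducedWords (hT : IsMarkovB T) {n : ℕ}
    (ih : ∀ w : List ℕ, (∀ i ∈ w, i < n) → T n (heckeWord n w) ∈ Rqz) {x : HB (n + 1 + 1)}
    (hx : x ∈ reducedWords (n + 1) (n + 1)) : T (n + 1) x ∈ Rqz := by
  rcases hx with ⟨A, hA, rfl⟩ | ⟨A, B, hA, hB, rfl⟩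
  · rw [heckeWord, ← inclB_braidWord hA, hT.2.1]
    exact ih A hA
  · have hBA : ∀ i ∈ B ++ A, i < n := List.forall_mem_append.mpr ⟨hB, hA⟩
    have h : braidWord (n + 1) B * (braidWord (n + 1) A * braidGen (n + 1) n) =
        inclB (braidWord n (B ++ A)) * bgen (lastGenB n) := by
      rw [inclB_braidWord hBA, bgen_lastGenB, braidWord_append, mul_assoc]
    rw [heckeWord, braidWord_append, braidWord_cons, ← mul_assoc, hT.1, h, hT.2.2]
    exact mul_mem (Subring.subset_closure (Or.inr rfl)) (ih _ hBA)

lemma apply_heckeWord_mem_Rqz (hT : IsMarkovB T) (hnorm : T 0 1 = 1) (n : ℕ) {w : List ℕ}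
    (hw : ∀ i ∈ w, i < n) : T n (heckeWord n w) ∈ Rqz := by
  induction n generalizing w with
  | zero =>
    obtain rfl : w = [] := w.eq_nil_iff_forall_not_mem.mpr fun i hi => (hw i hi).not_ge i.zero_le
    rw [heckeWord_nil, hnorm]
    exact one_mem _
  | succ n ih =>
    exact mem_Rqz_of_mem_span (T (n + 1))
      (fun _ hx => hT.apply_mem_Rqz_of_mem_reducedWords (fun _ hw => ih hw) hx)
      (heckeWord_mem_span_reducedWords le_rfl hw)

end IsMarkovB

/-- For every `n ≥ 1` and every positive braid `β ∈ B_n⁺`, the Ocneanu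
trace of `β` lies in the subring `ℤ[q, z]` of `𝕂(z)`. -/
theorem statement16 (T : TRBc) (hT : IsMarkovB T) (hnorm : T 0 1 = 1)
    (n : ℕ) (β : BG (n + 1)) (hβ : β ∈ Bplus (n + 1)) : T n (ιHB β) ∈ Rqz := by
  obtain ⟨w, hw, rfl⟩ := exists_braidWord_eq_of_mem_Bplus hβ
  exact hT.apply_heckeWord_mem_Rqz hnorm n hw
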